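/- Let n ≥ 1 and let a and b be independent random polynomials in R_n, each with independent mean-zero coefficients, where every coefficient of a has variance V_a and every coefficient of b has variance V_b. Then for every 0 ≤ i ≤ n−1, Var((a·b)|_i) = n · V_a · V_b, where the product a·b is computed in R_n. -/

import Mathlib

/-!
In `R_n` we have `X ^ n = -1`, so `X ^ m = ± X ^ (m % n)`. Hence the `i`-th coefficient of `a · b`
is a bilinear form `∑ j k, ε j k * a j * b k` whose coefficients `ε j k` are `±1` when
`j + k ≡ i (mod n)` and `0` otherwise; for each `j` exactly one `k` contributes, so `∑ ε² = n`.
Independence of `a` and `b` factors the covariance of `a j * b k` and `a j' * b k'` as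
`cov(a j, a j') * cov(b k, b k')`, which vanishes off the diagonal, so the variance of the
bilinear form is `Va * Vb * ∑ ε² = n * Va * Vb`.
-/

open MeasureTheory ProbabilityTheory Polynomial
open scoped NNReal ENNReal

/-- The polynomial in `ℝ[x]` of degree `< n` with coefficients `c 0, …, c (n-1)`;
it is the canonical representative of an element of `R_n = ℝ[x]/(x^n+1)`. -/
noncomputable def polyOf (n : ℕ) (c : Fin n → ℝ) : Polynomial ℝ :=
  ∑ j : Fin n, Polynomial.C (c j) * Polynomial.X ^ (j : ℕ)

/-- The `i`-th coefficient of the unique representative of degree `< n` of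
`p mod (x^n + 1)`, i.e. the `i`-th coefficient of the image of `p` in `R_n`. -/
noncomputable def redCoeff (n : ℕ) (p : Polynomial ℝ) (i : ℕ) : ℝ :=
  (p %ₘ (Polynomial.X ^ n + 1)).coeff i

namespace Polynomial

variable {R : Type*} [CommRing R]

theorem X_pow_modByMonic_X_pow_add_one [Nontrivial R] {n : ℕ} (hn : n ≠ 0) (m : ℕ) :
    (X ^ m : R[X]) %ₘ (X ^ n + 1) = C ((-1) ^ (m / n)) * X ^ (m % n) := by
  have hpos : 0 < n := Nat.pos_of_ne_zero hn
  have hmonic : (X ^ n + 1 : R[X]).Monic := by simpa using monic_X_pow_add_C (1 : R) hn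
  rw [modByMonic_eq_of_dvd_sub hmonic, (modByMonic_eq_self_iff hmonic).2]
  · calc degree (C ((-1) ^ (m / n)) * X ^ (m % n) : R[X])
        ≤ (m % n : ℕ) := degree_C_mul_X_pow_le _ _
      _ < n := mod_cast Nat.mod_lt m hpos
      _ = degree (X ^ n + 1 : R[X]) := by simpa using (degree_X_pow_add_C hpos (1 : R)).symm
  · have h : (X ^ n + 1 : R[X]) ∣ (X ^ n) ^ (m / n) - (-1) ^ (m / n) := by
      simpa using sub_dvd_pow_sub_pow (X ^ n : R[X]) (-1) (m / n)
    convert h.mul_right (X ^ (m % n)) using 1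
    rw [C_pow, C_neg, C_1, ← pow_mul, sub_mul, ← pow_add, Nat.div_add_mod]

end Polynomial

theorem redCoeff_X_pow_sq {n : ℕ} (hn : n ≠ 0) (m i : ℕ) :
    redCoeff n (X ^ m) i ^ 2 = if m % n = i then 1 else 0 := by
  rw [redCoeff, X_pow_modByMonic_X_pow_add_one hn, coeff_C_mul_X_pow]
  by_cases h : m % n = i
  · simp [h, ← pow_mul, pow_mul']
  · simp [h, Ne.symm h]

theorem polyOf_mul_polyOf (n : ℕ) (c d : Fin n → ℝ) :
    polyOf n c * polyOf n d = ∑ j : Fin n, ∑ k : Fin n, C (c j * d k) * X ^ (j + k : ℕ) := by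
  simp only [polyOf, Finset.sum_mul_sum, C_mul, pow_add]
  exact Finset.sum_congr rfl fun j _ => Finset.sum_congr rfl fun k _ => by ring

theorem redCoeff_polyOf_mul (n : ℕ) (c d : Fin n → ℝ) (i : ℕ) :
    redCoeff n (polyOf n c * polyOf n d) i
      = ∑ j : Fin n, ∑ k : Fin n, redCoeff n (X ^ (j + k : ℕ)) i * (c j * d k) := by
  simp only [redCoeff, polyOf_mul_polyOf, ← smul_eq_C_mul]
  simp only [← modByMonicHom_apply, map_sum, map_smul, finsetSum_coeff, coeff_smul, smul_eq_mul,
    mul_comm]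

theorem sum_sum_redCoeff_X_pow_sq {n : ℕ} (i : Fin n) :
    ∑ j : Fin n, ∑ k : Fin n, redCoeff n (X ^ (j + k : ℕ)) i ^ 2 = n := by
  have hn : n ≠ 0 := i.pos.ne'
  have : NeZero n := ⟨hn⟩
  have h (j k : Fin n) : redCoeff n (X ^ (j + k : ℕ)) i ^ 2 = if k = i - j then 1 else 0 := by
    simp only [redCoeff_X_pow_sq hn, ← Fin.val_add, Fin.val_inj, eq_sub_iff_add_eq']
  simp [h]

namespace ProbabilityTheory

variable {Ω ι κ : Type*} [MeasurableSpace Ω] {P : Measure Ω}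

theorem covariance_eq_integral_mul_of_integral_eq_zero {X Y : Ω → ℝ} (hX : ∫ ω, X ω ∂P = 0)
    (hY : ∫ ω, Y ω ∂P = 0) : cov[X, Y; P] = ∫ ω, X ω * Y ω ∂P := by
  simp [covariance, hX, hY]

theorem IndepFun.covariance_mul_mul {X Y Z W : Ω → ℝ}
    (h : IndepFun (fun ω => (X ω, Z ω)) (fun ω => (Y ω, W ω)) P)
    (hXm : AEStronglyMeasurable X P) (hYm : AEStronglyMeasurable Y P)
    (hZm : AEStronglyMeasurable Z P) (hWm : AEStronglyMeasurable W P)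
    (hX : ∫ ω, X ω ∂P = 0) (hY : ∫ ω, Y ω ∂P = 0) (hZ : ∫ ω, Z ω ∂P = 0)
    (hW : ∫ ω, W ω ∂P = 0) :
    cov[X * Y, Z * W; P] = cov[X, Z; P] * cov[Y, W; P] := by
  have hXY : IndepFun X Y P := h.comp measurable_fst measurable_fst
  have hZW : IndepFun Z W P := h.comp measurable_snd measurable_snd
  have hind : IndepFun (X * Z) (Y * W) P :=
    h.comp (measurable_fst.mul measurable_snd) (measurable_fst.mul measurable_snd)
  rw [covariance_eq_integral_mul_of_integral_eq_zero
      (by rw [hXY.integral_mul_eq_mul_integral hXm hYm, hX, zero_mul])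
      (by rw [hZW.integral_mul_eq_mul_integral hZm hWm, hZ, zero_mul]),
    covariance_eq_integral_mul_of_integral_eq_zero hX hZ,
    covariance_eq_integral_mul_of_integral_eq_zero hY hW]
  have hprod := hind.integral_mul_eq_mul_integral (hXm.mul hZm) (hYm.mul hWm)
  simp only [Pi.mul_apply] at hprod ⊢
  simp only [← hprod, mul_mul_mul_comm]

theorem IndepFun.memLp_two_mul {X Y : Ω → ℝ} (h : IndepFun X Y P) (hX : MemLp X 2 P)
    (hY : MemLp Y 2 P) : MemLp (X * Y) 2 P := by
  rw [memLp_two_iff_integrable_sq (hX.1.mul hY.1)]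
  simp only [Pi.mul_apply, mul_pow]
  exact (h.comp (measurable_id.pow_const 2) (measurable_id.pow_const 2)).integrable_mul
    hX.integrable_sq hY.integrable_sq

theorem iIndepFun.covariance_eq_ite [DecidableEq ι] {a : ι → Ω → ℝ} (h : iIndepFun a P)
    (ha : ∀ j, MemLp (a j) 2 P) {V : ℝ} (hV : ∀ j, Var[a j; P] = V) (j k : ι) :
    cov[a j, a k; P] = if j = k then V else 0 := by
  split_ifs with hjk
  · rw [hjk, covariance_self (ha k).aemeasurable, hV]
  · exact (h.indepFun hjk).covariance_eq_zero (ha j) (ha k)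

theorem variance_sum_sum_mul_of_indepFun [IsFiniteMeasure P] [Fintype ι] [Fintype κ]
    [DecidableEq ι] [DecidableEq κ] {a : ι → Ω → ℝ} {b : κ → Ω → ℝ} {Va Vb : ℝ}
    (hab : IndepFun (fun ω j => a j ω) (fun ω k => b k ω) P)
    (ha : ∀ j, MemLp (a j) 2 P) (hb : ∀ k, MemLp (b k) 2 P)
    (ha0 : ∀ j, ∫ ω, a j ω ∂P = 0) (hb0 : ∀ k, ∫ ω, b k ω ∂P = 0)
    (hcova : ∀ j j', cov[a j, a j'; P] = if j = j' then Va else 0)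
    (hcovb : ∀ k k', cov[b k, b k'; P] = if k = k' then Vb else 0) (w : ι → κ → ℝ) :
    Var[fun ω => ∑ j, ∑ k, w j k * (a j ω * b k ω); P] = Va * Vb * ∑ j, ∑ k, w j k ^ 2 := by
  set Y : ι × κ → Ω → ℝ := fun p ω => w p.1 p.2 * (a p.1 ω * b p.2 ω)
  have hY : ∀ p, MemLp (Y p) 2 P := fun p =>
    ((hab.comp (measurable_pi_apply p.1) (measurable_pi_apply p.2)).memLp_two_mul
      (ha p.1) (hb p.2)).const_mul _
  have hcov (p q : ι × κ) : cov[Y p, Y q; P]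
      = w p.1 p.2 * w q.1 q.2 * (cov[a p.1, a q.1; P] * cov[b p.2, b q.2; P]) := by
    have h := hab.comp (φ := fun v => (v p.1, v q.1)) (ψ := fun v => (v p.2, v q.2))
      (by fun_prop) (by fun_prop)
    rw [covariance_const_mul_left, covariance_const_mul_right, mul_assoc,
      ← h.covariance_mul_mul (ha _).1 (hb _).1 (ha _).1 (hb _).1 (ha0 _) (hb0 _) (ha0 _) (hb0 _)]
    rfl
  calc Var[fun ω => ∑ j, ∑ k, w j k * (a j ω * b k ω); P]
      = Var[fun ω => ∑ p, Y p ω; P] := by simp only [Y, Fintype.sum_prod_type]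
    _ = ∑ p, ∑ q, cov[Y p, Y q; P] := variance_fun_sum hY
    _ = Va * Vb * ∑ j, ∑ k, w j k ^ 2 := by
      simp only [hcov, hcova, hcovb, mul_ite, ite_mul, zero_mul, mul_zero, Fintype.sum_prod_type,
        Finset.sum_ite_eq, Finset.mem_univ, ↓reduceIte, Finset.mul_sum]
      exact Finset.sum_congr rfl fun j _ => Finset.sum_congr rfl fun k _ => by ring

end ProbabilityTheory

theorem stmt12_general {Ω : Type*} [MeasurableSpace Ω] (P : Measure Ω) [IsProbabilityMeasure P]
    (n : ℕ) (Va Vb : ℝ)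
    (a b : Fin n → Ω → ℝ)
    -- `a` and `b` are independent of each other
    (hab : IndepFun (fun ω (j : Fin n) => a j ω) (fun ω (j : Fin n) => b j ω) P)
    -- within each, the coefficients are independent, mean-zero, square-integrable
    (haindep : iIndepFun a P)
    (hbindep : iIndepFun b P)
    (hamean : ∀ j, (∫ ω, a j ω ∂P) = 0) (hbmean : ∀ j, (∫ ω, b j ω ∂P) = 0)
    (haL2 : ∀ j, MemLp (a j) 2 P) (hbL2 : ∀ j, MemLp (b j) 2 P)
    (havar : ∀ j, variance (a j) P = Va) (hbvar : ∀ j, variance (b j) P = Vb)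
    (i : Fin n) :
    variance (fun ω =>
        redCoeff n (polyOf n (fun j => a j ω) * polyOf n (fun j => b j ω)) i) P
      = n * Va * Vb := by
  simp_rw [redCoeff_polyOf_mul]
  rw [variance_sum_sum_mul_of_indepFun hab haL2 hbL2 hamean hbmean
    (haindep.covariance_eq_ite haL2 havar) (hbindep.covariance_eq_ite hbL2 hbvar),
    sum_sum_redCoeff_X_pow_sq]
  ring

/-- If `a` and `b` are independent random polynomials in `R_n` with
independent mean-zero coefficients of variances `V_a` and `V_b`, then every coefficient
of the product `a·b` (computed in `R_n`) has variance `n · V_a · V_b`. -/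
theorem stmt12 {Ω : Type*} [MeasurableSpace Ω] (P : Measure Ω) [IsProbabilityMeasure P]
    (n : ℕ) (hn : 1 ≤ n) (Va Vb : ℝ)
    (a b : Fin n → Ω → ℝ)
    (hameas : ∀ j, Measurable (a j)) (hbmeas : ∀ j, Measurable (b j))
    -- `a` and `b` are independent of each other
    (hab : IndepFun (fun ω (j : Fin n) => a j ω) (fun ω (j : Fin n) => b j ω) P)
    -- within each, the coefficients are independent, mean-zero, square-integrable
    (haindep : iIndepFun a P)
    (hbindep : iIndepFun b P)
    (hamean : ∀ j, (∫ ω, a j ω ∂P) = 0) (hbmean : ∀ j, (∫ ω, b j ω ∂P) = 0)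
    (haL2 : ∀ j, MemLp (a j) 2 P) (hbL2 : ∀ j, MemLp (b j) 2 P)
    (havar : ∀ j, variance (a j) P = Va) (hbvar : ∀ j, variance (b j) P = Vb)
    (i : Fin n) :
    variance (fun ω =>
        redCoeff n (polyOf n (fun j => a j ω) * polyOf n (fun j => b j ω)) i) P
      = n * Va * Vb :=
  stmt12_general P n Va Vb a b hab haindep hbindep hamean hbmean haL2 hbL2 havar hbvar i
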